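/- Let β, x₁,…,x_d, b₁, b₂,… be independent indeterminates and work in the ring of formal power series over ℤ in these variables (where each 1+βx_i is invertible). Let a = (a₁,…,a_d) ∈ ℤ^d with a_i + d - i ≥ 0 for every i. With H' := ( Σ_{s≥0} C(i-j, s) β^s G^{(a_i+d-i)}_{a_i+j-i+s} )_{1≤i,j≤d} and M̄ := ( (-1)^{d-i} ē_{d-i}^{(j)} )_{1≤i,j≤d}, where ē_p^{(j)} is the p-th elementary symmetric polynomial in the d-1 quantities x_i/(1+βx_i) for i ≠ j and C(n,s) is the generalized binomial coefficient given by (1+x)^n = Σ_{s≥0} C(n,s)x^s, one has det H' · det M̄ = (∏_{j=1}^{d} (1+βx_j)^{1-d}) · det( [x_j|b]^{a_i+d-i} (1+βx_j)^{i-1} )_{1≤i,j≤d}. -/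

import Mathlib

open scoped BigOperators

namespace GrothDet

/-- Index type for the indeterminates: `β`, `x₁,…,x_d`, `b₁,b₂,…`. -/
abbrev Idx (d : ℕ) := Unit ⊕ Fin d ⊕ ℕ

/-- The ambient ring: formal power series over `ℤ` in `β`, the `xᵢ` and the `bⱼ`. -/
abbrev R (d : ℕ) := MvPowerSeries (Idx d) ℤ

noncomputable def β (d : ℕ) : R d := MvPowerSeries.X (Sum.inl ())
noncomputable def x (d : ℕ) (i : Fin d) : R d := MvPowerSeries.X (Sum.inr (Sum.inl i))
noncomputable def b (d : ℕ) (ℓ : ℕ) : R d := MvPowerSeries.X (Sum.inr (Sum.inr ℓ))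

/-- `x ⊕ y := x + y + βxy`. -/
noncomputable def oplus (d : ℕ) (u v : R d) : R d := u + v + β d * u * v

/-- `[y|b]^k := (y ⊕ b₁)⋯(y ⊕ b_k)`. -/
noncomputable def fb (d : ℕ) (y : R d) (k : ℕ) : R d :=
  ∏ ℓ ∈ Finset.range k, oplus d y (b d ℓ)

/-- The multiplicative inverse of `1 + β * x j` (a unit since its constant term is `1`). -/
noncomputable def invOneAdd (d : ℕ) (j : Fin d) : R d :=
  MvPowerSeries.invOfUnit (1 + β d * x d j) 1

/-- `F^{(k)}(u) = ∏ᵢ (1+βxᵢ)/(1-xᵢu) · ∏_{ℓ=1}^k (1+(u+β)b_ℓ)` as a power series in `u`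
over `R d`; here `(1-xᵢu)⁻¹ = ∑_n xᵢⁿ uⁿ`. -/
noncomputable def F (d : ℕ) (k : ℕ) : PowerSeries (R d) :=
  (∏ i : Fin d,
      PowerSeries.C (1 + β d * x d i) * PowerSeries.mk fun n => x d i ^ n) *
    ∏ ℓ ∈ Finset.range k,
      (1 + (PowerSeries.X + PowerSeries.C (β d)) * PowerSeries.C (b d ℓ))

/-- `[u^t] F^{(k)}(u)`, extended by `0` in negative degrees `t`. -/
noncomputable def Fcoeff (d : ℕ) (k : ℕ) (t : ℤ) : R d :=
  if 0 ≤ t then PowerSeries.coeff t.toNat (F d k) else 0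

/-- The sum `∑_{s≥0} f s` of a family of power series such that `β^s ∣ f s`:
it is defined coefficientwise; on the coefficient of a monomial `n` only the
(finitely many) terms with `s ≤ n(β)` contribute, and the value is the limit of the
partial sums in the formal power series topology. -/
noncomputable def seriesSum (d : ℕ) (f : ℕ → R d) : R d :=
  (fun n => ∑ s ∈ Finset.range (n (Sum.inl ()) + 1), MvPowerSeries.coeff n (f s) :
    (Idx d →₀ ℕ) → ℤ)

/-- `G^{(k)}_m = ∑_{s≥0} (-β)^s [u^{m+s}] F^{(k)}(u)`. -/
noncomputable def G (d : ℕ) (k : ℕ) (m : ℤ) : R d :=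
  seriesSum d fun s => (-β d) ^ s * Fcoeff d k (m + s)

/-- The `p`-th elementary symmetric function of the family `f` restricted to `S`. -/
noncomputable def esym (d : ℕ) (S : Finset (Fin d)) (p : ℕ) (f : Fin d → R d) : R d :=
  ∑ t ∈ S.powersetCard p, ∏ i ∈ t, f i

/-- `x_i/(1+βx_i) = -x̄_i`. -/
noncomputable def xbar (d : ℕ) (i : Fin d) : R d := x d i * invOneAdd d i

/-!
Write `T_w` (`binomConv`) for `Φ ↦ [u^N] (1 + β u⁻¹)^w Φ(u)`. Then `G^{(k)} = T_{-1} F^{(k)}` and,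
by Chu–Vandermonde, `T_a ∘ T_b = T_{a+b}`, so the entry `(i, m)` of `H'` is `T_{i-m-1} F^{(k_i)}` at
`u^{a_i+m-i}`. As `u^p (1 + β u⁻¹)^p = (u + β)^p`, pairing row `i` of `H'` with column `j` of `M̄`
gives `T_{i-d}` applied to `∏_{i'≠j} (1 - (u + β) x̄_{i'}) · F^{(k_i)}(u)` at `u^{k_i}`, and this
product is `(1 + βx_j)/(1 - x_j u) · ∏_ℓ (1 + (u + β) b_ℓ)`, whose `u^{k+r}` coefficient is
`(1 + βx_j) x_j^r [x_j|b]^k`. Summing the binomial series leaves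
`(1 + βx_j)^{1-d} [x_j|b]^{k_i} (1 + βx_j)^i`: `H' M̄` is the bialternant matrix with column `j`
scaled by `(1 + βx_j)^{1-d}`.
-/

open Finset

section SeriesSum

variable {d : ℕ}

theorem coeff_seriesSum (f : ℕ → R d) (n : Idx d →₀ ℕ) :
    MvPowerSeries.coeff n (seriesSum d f)
      = ∑ s ∈ range (n (Sum.inl ()) + 1), MvPowerSeries.coeff n (f s) := rfl

theorem coeff_eq_zero_of_beta_pow_dvd {s : ℕ} {g : R d} (hg : β d ^ s ∣ g)
    {n : Idx d →₀ ℕ} (hn : n (Sum.inl ()) < s) : MvPowerSeries.coeff n g = 0 :=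
  MvPowerSeries.X_pow_dvd_iff.1 hg n hn

theorem coeff_seriesSum_eq_sum_range {f : ℕ → R d} (hf : ∀ s, β d ^ s ∣ f s)
    {n : Idx d →₀ ℕ} {N : ℕ} (hN : n (Sum.inl ()) < N) :
    MvPowerSeries.coeff n (seriesSum d f) = ∑ s ∈ range N, MvPowerSeries.coeff n (f s) :=
  sum_subset (range_subset_range.2 hN) fun s _ hs =>
    coeff_eq_zero_of_beta_pow_dvd (hf s) (by simpa using hs)

theorem seriesSum_eq_sum_range {f : ℕ → R d} (hf : ∀ s, β d ^ s ∣ f s) {M : ℕ}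
    (hM : ∀ s, M ≤ s → f s = 0) : seriesSum d f = ∑ s ∈ range M, f s := by
  ext n
  rw [map_sum, coeff_seriesSum_eq_sum_range hf (N := max M (n (Sum.inl ()) + 1)) (by omega)]
  refine (sum_subset (range_subset_range.2 (le_max_left _ _)) fun s _ hs => ?_).symm
  rw [hM s (by simpa using hs), map_zero]

theorem seriesSum_add (f g : ℕ → R d) :
    seriesSum d (f + g) = seriesSum d f + seriesSum d g := by
  ext n
  simp only [coeff_seriesSum, map_add, Pi.add_apply, sum_add_distrib]

theorem seriesSum_smul (c : R d) {f : ℕ → R d} (hf : ∀ s, β d ^ s ∣ f s) :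
    seriesSum d (c • f) = c • seriesSum d f := by
  ext n
  rw [coeff_seriesSum, smul_eq_mul, MvPowerSeries.coeff_mul]
  simp only [Pi.smul_apply, smul_eq_mul, MvPowerSeries.coeff_mul]
  rw [sum_comm]
  refine sum_congr rfl fun p hp => ?_
  have hle : p.2 (Sum.inl ()) ≤ n (Sum.inl ()) := by
    rw [← mem_antidiagonal.1 hp]; simp
  rw [coeff_seriesSum_eq_sum_range hf (Nat.lt_succ_of_le hle), mul_sum]

theorem seriesSum_seriesSum {g : ℕ → ℕ → R d} (hg : ∀ s r, β d ^ (s + r) ∣ g s r) :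
    seriesSum d (fun s => seriesSum d (g s))
      = seriesSum d (fun t => ∑ sr ∈ antidiagonal t, g sr.1 sr.2) := by
  ext n
  simp only [coeff_seriesSum, map_sum, Finset.Nat.sum_antidiagonal_eq_sum_range_succ_mk,
    Nat.succ_eq_add_one]
  rw [sum_range_diag_flip _ fun s r => MvPowerSeries.coeff n (g s r)]
  refine sum_congr rfl fun s _ => ?_
  refine (sum_subset (range_subset_range.2 (by omega)) fun r _ hr => ?_).symm
  exact coeff_eq_zero_of_beta_pow_dvd (hg s r) (by simp at hr; omega)

theorem beta_pow_dvd_smul (c : ℤ) (r : ℕ) (g : R d) : β d ^ r ∣ c • (β d ^ r * g) :=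
  ⟨c • g, (mul_smul_comm _ _ _).symm⟩

end SeriesSum

/-- `binomConv d w N φ` is the coefficient of `u^N` in `(1 + β u⁻¹)^w · ∑ₙ φ(n) uⁿ`. -/
noncomputable def binomConv (d : ℕ) (w N : ℤ) : (ℤ → R d) →ₗ[R d] R d where
  toFun φ := seriesSum d fun r => Ring.choose w r • (β d ^ r * φ (N + r))
  map_add' φ ψ := by
    simp only [Pi.add_apply, mul_add, smul_add]
    exact seriesSum_add _ _
  map_smul' c φ := by
    rw [RingHom.id_apply, ← seriesSum_smul c fun r => beta_pow_dvd_smul (Ring.choose w r) r _]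
    congr 1
    funext r
    simp only [Pi.smul_apply, smul_eq_mul, mul_smul_comm, mul_left_comm]

section BinomConv

variable {d : ℕ}

theorem binomConv_apply (w N : ℤ) (φ : ℤ → R d) :
    binomConv d w N φ = seriesSum d fun r => Ring.choose w r • (β d ^ r * φ (N + r)) := rfl

theorem binomConv_comp_sub (w N c : ℤ) (φ : ℤ → R d) :
    binomConv d w N (fun n => φ (n - c)) = binomConv d w (N - c) φ := by
  simp only [binomConv_apply, sub_add_eq_add_sub]

theorem binomConv_natCast (p : ℕ) (N : ℤ) (φ : ℤ → R d) :
    binomConv d p N φ = ∑ s ∈ range (p + 1), p.choose s • (β d ^ s * φ (N + s)) := by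
  rw [binomConv_apply, seriesSum_eq_sum_range (M := p + 1) fun r => beta_pow_dvd_smul _ r _]
  · simp only [Ring.choose_natCast, natCast_zsmul]
  · intro s hs
    rw [Ring.choose_natCast, Nat.choose_eq_zero_of_lt (by omega), Nat.cast_zero, zero_smul]

theorem binomConv_zero (N : ℤ) (φ : ℤ → R d) : binomConv d 0 N φ = φ N := by
  simpa using binomConv_natCast 0 N φ

theorem binomConv_binomConv (a b N : ℤ) (φ : ℤ → R d) :
    binomConv d a N (fun n => binomConv d b n φ) = binomConv d (a + b) N φ := by
  let g : ℕ → ℕ → R d := fun s r =>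
    (Ring.choose a s * Ring.choose b r) • (β d ^ (s + r) * φ (N + ↑(s + r)))
  have hterm : ∀ s : ℕ, Ring.choose a s • (β d ^ s * binomConv d b (N + s) φ)
      = seriesSum d (g s) := by
    intro s
    rw [binomConv_apply, ← smul_mul_assoc, ← smul_eq_mul,
      ← seriesSum_smul _ fun r => beta_pow_dvd_smul (Ring.choose b r) r _]
    congr 1
    funext r
    simp only [g, Pi.smul_apply, smul_eq_mul, mul_smul_comm, smul_mul_assoc, mul_smul, pow_add,
      Nat.cast_add, add_assoc]
    ring
  rw [binomConv_apply, binomConv_apply]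
  simp only [hterm]
  rw [seriesSum_seriesSum fun s r => beta_pow_dvd_smul _ (s + r) _]
  congr 1
  funext t
  have hdiag : ∀ sr ∈ antidiagonal t, g sr.1 sr.2
      = (Ring.choose a sr.1 * Ring.choose b sr.2) • (β d ^ t * φ (N + t)) := by
    intro sr hsr
    simp only [g, mem_antidiagonal.1 hsr]
  rw [sum_congr rfl hdiag, ← sum_smul, Ring.add_choose_eq t (Commute.all a b)]

theorem G_eq_binomConv (k : ℕ) (m : ℤ) : G d k m = binomConv d (-1) m (Fcoeff d k) := by
  rw [G, binomConv_apply]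
  congr 1
  funext s
  have hc : Ring.choose (-1 : ℤ) s = (-1) ^ s := by
    simp [Ring.choose_neg, Ring.choose_natCast, Units.smul_def, Int.coe_negOnePow_natCast]
  rw [hc, zsmul_eq_mul, neg_pow]
  push_cast
  ring

end BinomConv

noncomputable def lcoeff {A : Type*} [Semiring A] : PowerSeries A →ₗ[A] (ℤ → A) :=
  LinearMap.pi fun n => if 0 ≤ n then PowerSeries.coeff n.toNat else 0

section LCoeff

variable {A : Type*}

theorem lcoeff_natCast [Semiring A] (ψ : PowerSeries A) (n : ℕ) :
    lcoeff ψ n = PowerSeries.coeff n ψ := by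
  simp [lcoeff]

theorem lcoeff_of_neg [Semiring A] (ψ : PowerSeries A) {n : ℤ} (hn : n < 0) : lcoeff ψ n = 0 := by
  simp [lcoeff, not_le.2 hn]

theorem lcoeff_X_mul [Semiring A] (ψ : PowerSeries A) :
    lcoeff (PowerSeries.X * ψ) = fun n => lcoeff ψ (n - 1) := by
  funext n
  rcases lt_trichotomy n 0 with hn | rfl | hn
  · rw [lcoeff_of_neg _ hn, lcoeff_of_neg _ (by omega)]
  · rw [← Nat.cast_zero, lcoeff_natCast, PowerSeries.coeff_zero_X_mul, lcoeff_of_neg _ (by omega)]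
  · obtain ⟨m, rfl⟩ : ∃ m : ℕ, n = (m + 1 : ℕ) := ⟨n.toNat - 1, by omega⟩
    rw [lcoeff_natCast, PowerSeries.coeff_succ_X_mul, Nat.cast_succ, add_sub_cancel_right,
      lcoeff_natCast]

theorem lcoeff_C_mul [CommSemiring A] (c : A) (ψ : PowerSeries A) :
    lcoeff (PowerSeries.C c * ψ) = c • lcoeff ψ := by
  rw [← PowerSeries.smul_eq_C_mul, map_smul]

end LCoeff

theorem Fcoeff_eq_lcoeff (d k : ℕ) : Fcoeff d k = lcoeff (F d k) := by
  funext t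
  simp only [Fcoeff, lcoeff, LinearMap.pi_apply]
  split_ifs <;> rfl

theorem prod_one_sub_mul_eq_sum {A ι : Type*} [CommRing A] [DecidableEq ι]
    (S : Finset ι) (u : A) (g : ι → A) :
    ∏ i ∈ S, (1 - u * g i)
      = ∑ p ∈ range (#S + 1), (-1) ^ p * (∑ t ∈ S.powersetCard p, ∏ i ∈ t, g i) * u ^ p := by
  have h1 : ∀ i ∈ S, 1 - u * g i = (-u) * g i + 1 := fun i _ => by ring
  rw [prod_congr rfl h1, prod_add]
  simp only [prod_const_one, mul_one]
  rw [sum_powerset]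
  refine sum_congr rfl fun p _ => ?_
  rw [mul_sum, sum_mul]
  refine sum_congr rfl fun t ht => ?_
  rw [prod_mul_distrib, prod_const, (mem_powersetCard.1 ht).2, neg_pow]
  ring

section BinomConvLCoeff

variable {d : ℕ}

theorem binomConv_add_one (w N : ℤ) (φ : ℤ → R d) :
    binomConv d (w + 1) N φ = binomConv d w N φ + β d • binomConv d w (N + 1) φ := by
  rw [add_comm, ← binomConv_binomConv, ← Nat.cast_one, binomConv_natCast]
  simp [sum_range_succ]

-- `u^p (1 + β u⁻¹)^p = (u + β)^p`
theorem binomConv_lcoeff_X_add_C_pow_mul (ψ : PowerSeries (R d)) (w : ℤ) (p : ℕ) (N : ℤ) :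
    binomConv d w N (lcoeff ((PowerSeries.X + PowerSeries.C (β d)) ^ p * ψ))
      = binomConv d (w + p) (N - p) (lcoeff ψ) := by
  induction p generalizing N with
  | zero => simp
  | succ p ih =>
    rw [pow_succ', mul_assoc, add_mul, map_add, lcoeff_X_mul, lcoeff_C_mul, map_add, map_smul,
      binomConv_comp_sub, ih, ih, Nat.cast_succ, ← add_assoc, binomConv_add_one,
      show N - 1 - (p : ℤ) = N - (p + 1) by ring, show N - (p + 1 : ℤ) + 1 = N - p by ring]

theorem binomConv_lcoeff_prod_mul (S : Finset (Fin d)) (f : Fin d → R d)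
    (ψ : PowerSeries (R d)) (w N : ℤ) :
    binomConv d w N
        (lcoeff ((∏ i ∈ S, (1 - (PowerSeries.X + PowerSeries.C (β d)) * PowerSeries.C (f i))) * ψ))
      = ∑ p ∈ range (#S + 1),
          (-1) ^ p * esym d S p f * binomConv d (w + p) (N - p) (lcoeff ψ) := by
  rw [prod_one_sub_mul_eq_sum, sum_mul, map_sum, map_sum]
  refine sum_congr rfl fun p _ => ?_
  have hC : (-1) ^ p * (∑ t ∈ S.powersetCard p, ∏ i ∈ t, PowerSeries.C (f i))
      = PowerSeries.C ((-1) ^ p * esym d S p f) := by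
    simp only [esym, map_mul, map_pow, map_neg, map_one, map_sum, map_prod]
  rw [hC, mul_assoc, lcoeff_C_mul, map_smul, binomConv_lcoeff_X_add_C_pow_mul, smul_eq_mul]

end BinomConvLCoeff

theorem one_sub_C_mul_X_mul_mk_pow {A : Type*} [CommRing A] (a : A) :
    (1 - PowerSeries.C a * PowerSeries.X) * PowerSeries.mk (fun n => a ^ n) = 1 := by
  have h := congrArg (PowerSeries.rescale a) (PowerSeries.mk_one_mul_one_sub_eq_one A)
  simpa [PowerSeries.rescale_mk, PowerSeries.rescale_X, mul_comm] using h

section GeneratingFunction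

variable {d : ℕ}

theorem one_add_mul_invOneAdd (j : Fin d) : (1 + β d * x d j) * invOneAdd d j = 1 :=
  MvPowerSeries.mul_invOfUnit _ _ (by simp [β, x])

theorem one_sub_mul_C_xbar_mul (j : Fin d) :
    (1 - (PowerSeries.X + PowerSeries.C (β d)) * PowerSeries.C (xbar d j)) *
      (PowerSeries.C (1 + β d * x d j) * PowerSeries.mk fun n => x d j ^ n) = 1 := by
  have hx : xbar d j * (1 + β d * x d j) = x d j := by
    rw [xbar, mul_assoc, mul_comm (invOneAdd d j), one_add_mul_invOneAdd, mul_one]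
  have h1 : (1 - (PowerSeries.X + PowerSeries.C (β d)) * PowerSeries.C (xbar d j)) *
      PowerSeries.C (1 + β d * x d j) = 1 - PowerSeries.C (x d j) * PowerSeries.X := by
    rw [sub_mul, one_mul, mul_assoc, ← map_mul, hx, map_add, map_one, map_mul]
    ring
  rw [← mul_assoc, h1, one_sub_C_mul_X_mul_mk_pow]

theorem prod_one_sub_mul_F (j : Fin d) (k : ℕ) :
    (∏ i ∈ univ \ {j}, (1 - (PowerSeries.X + PowerSeries.C (β d)) * PowerSeries.C (xbar d i))) *
        F d k
      = PowerSeries.C (1 + β d * x d j) * ((PowerSeries.mk fun n => x d j ^ n) *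
          ∏ ℓ ∈ range k, (1 + (PowerSeries.X + PowerSeries.C (β d)) * PowerSeries.C (b d ℓ))) := by
  have hinv : (∏ i ∈ univ.erase j,
        (1 - (PowerSeries.X + PowerSeries.C (β d)) * PowerSeries.C (xbar d i))) *
      ∏ i ∈ univ.erase j, PowerSeries.C (1 + β d * x d i) * PowerSeries.mk (fun n => x d i ^ n)
        = 1 := by
    rw [← prod_mul_distrib]
    exact prod_eq_one fun i _ => one_sub_mul_C_xbar_mul i
  rw [F, ← mul_prod_erase univ _ (mem_univ j), sdiff_singleton_eq_erase]
  linear_combination (PowerSeries.C (1 + β d * x d j) * (PowerSeries.mk fun n => x d j ^ n) *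
    ∏ ℓ ∈ range k, (1 + (PowerSeries.X + PowerSeries.C (β d)) * PowerSeries.C (b d ℓ))) * hinv

theorem coeff_mk_pow_mul_prod (y : R d) (k r : ℕ) :
    PowerSeries.coeff (k + r) ((PowerSeries.mk fun n => y ^ n) *
        ∏ ℓ ∈ range k, (1 + (PowerSeries.X + PowerSeries.C (β d)) * PowerSeries.C (b d ℓ)))
      = y ^ r * fb d y k := by
  induction k generalizing r with
  | zero => simp [fb]
  | succ k ih =>
    have hlin : ∀ φ : PowerSeries (R d), ∀ n : ℕ,
        PowerSeries.coeff (n + 1) (φ * (1 + (PowerSeries.X + PowerSeries.C (β d)) *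
          PowerSeries.C (b d k)))
          = PowerSeries.coeff (n + 1) φ * (1 + β d * b d k) + PowerSeries.coeff n φ * b d k := by
      intro φ n
      rw [show φ * (1 + (PowerSeries.X + PowerSeries.C (β d)) * PowerSeries.C (b d k))
          = φ * PowerSeries.C (1 + β d * b d k) + PowerSeries.X * (φ * PowerSeries.C (b d k)) by
            simp only [map_add, map_one, map_mul]; ring,
        map_add, PowerSeries.coeff_mul_C, PowerSeries.coeff_succ_X_mul, PowerSeries.coeff_mul_C]
    have hfb : fb d y (k + 1) = fb d y k * oplus d y (b d k) := prod_range_succ _ _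
    rw [prod_range_succ, ← mul_assoc, add_right_comm, hlin, add_assoc, ih, ih, hfb, oplus]
    ring

end GeneratingFunction

section BinomialSeries

variable {d : ℕ}

theorem binomConv_of_geom {w N : ℤ} {φ : ℤ → R d} (c y : R d)
    (hφ : ∀ r : ℕ, φ (N + r) = c * y ^ r) :
    binomConv d w N φ = c * binomConv d w 0 (fun n => y ^ n.toNat) := by
  rw [← smul_eq_mul, ← map_smul, binomConv_apply, binomConv_apply]
  simp only [hφ, Pi.smul_apply, smul_eq_mul, zero_add, Int.toNat_natCast]

theorem binomConv_natCast_geom (n : ℕ) (y : R d) :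
    binomConv d n 0 (fun m => y ^ m.toNat) = (1 + β d * y) ^ n := by
  rw [binomConv_natCast, add_comm (1 : R d), add_pow]
  refine sum_congr rfl fun s _ => ?_
  simp only [zero_add, Int.toNat_natCast, one_pow, mul_one, nsmul_eq_mul, mul_pow]
  ring

theorem one_add_pow_mul_binomConv_neg_geom (n : ℕ) (y : R d) :
    (1 + β d * y) ^ n * binomConv d (-n) 0 (fun m => y ^ m.toNat) = 1 := by
  set B := binomConv d (-n) 0 (fun m => y ^ m.toNat)
  have hshift : ∀ r : ℕ, binomConv d (-n) (0 + r) (fun m => y ^ m.toNat) = B * y ^ r := by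
    intro r
    rw [binomConv_of_geom (y ^ r) y fun s => by
      rw [zero_add, ← Nat.cast_add, Int.toNat_natCast, pow_add], mul_comm]
  calc (1 + β d * y) ^ n * B = B * binomConv d n 0 (fun m => y ^ m.toNat) := by
        rw [binomConv_natCast_geom, mul_comm]
    _ = binomConv d n 0 (fun m => binomConv d (-n) m (fun m => y ^ m.toNat)) :=
        (binomConv_of_geom B y hshift).symm
    _ = 1 := by rw [binomConv_binomConv, add_neg_cancel, binomConv_zero]; simp

theorem invOneAdd_pow_eq_binomConv (j : Fin d) (n : ℕ) :
    invOneAdd d j ^ n = binomConv d (-n) 0 (fun m => x d j ^ m.toNat) :=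
  left_inv_eq_right_inv (by rw [← mul_pow, mul_comm, one_add_mul_invOneAdd, one_pow])
    (one_add_pow_mul_binomConv_neg_geom n _)

end BinomialSeries

section Entries

variable {d : ℕ}

theorem sum_esym_mul_binomConv_Fcoeff (j : Fin d) (k : ℕ) (w : ℤ) :
    ∑ p ∈ range d,
        (-1) ^ p * esym d (univ \ {j}) p (xbar d) * binomConv d (w + p) (k - p) (Fcoeff d k)
      = (1 + β d * x d j) * fb d (x d j) k * binomConv d w 0 (fun n => x d j ^ n.toNat) := by
  have hcard : #(univ \ {j}) + 1 = d := by
    rw [card_univ_sdiff, card_singleton, Fintype.card_fin]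
    have := j.pos
    omega
  rw [show range d = range (#(univ \ {j}) + 1) by rw [hcard], Fcoeff_eq_lcoeff,
    ← binomConv_lcoeff_prod_mul, prod_one_sub_mul_F, lcoeff_C_mul, map_smul, smul_eq_mul,
    mul_assoc]
  congr 1
  refine binomConv_of_geom _ _ fun r => ?_
  rw [← Nat.cast_add, lcoeff_natCast, coeff_mk_pow_mul_prod, mul_comm]

theorem sum_binomConv_G_mul_esym (a : ℤ) (i j : Fin d) {k : ℕ}
    (hk : (k : ℤ) = a + d - ((i : ℕ) + 1)) :
    ∑ m : Fin d, binomConv d ((i : ℕ) - (m : ℕ)) (a + (m : ℕ) - (i : ℕ)) (G d k) *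
        ((-1) ^ (d - 1 - (m : ℕ)) * esym d (univ \ {j}) (d - 1 - (m : ℕ)) (xbar d))
      = invOneAdd d j ^ (d - 1) * (fb d (x d j) k * (1 + β d * x d j) ^ (i : ℕ)) := by
  set f : ℕ → R d := fun p => (-1) ^ p * esym d (univ \ {j}) p (xbar d) *
    binomConv d ((i : ℕ) - d + p) (k - p) (Fcoeff d k)
  have hterm : ∀ m : Fin d, binomConv d ((i : ℕ) - (m : ℕ)) (a + (m : ℕ) - (i : ℕ)) (G d k) *
      ((-1) ^ (d - 1 - (m : ℕ)) * esym d (univ \ {j}) (d - 1 - (m : ℕ)) (xbar d))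
        = f (d - 1 - m) := by
    intro m
    have hm := m.isLt
    simp only [f, funext (G_eq_binomConv k), binomConv_binomConv]
    rw [mul_comm]
    congr 3 <;> push_cast [Nat.sub_sub, Nat.cast_sub (by omega : (m : ℕ) + 1 ≤ d)] <;> omega
  have hreflect : ∑ m : Fin d, f (d - 1 - m) = ∑ p ∈ range d, f p := by
    rw [← Fin.sum_univ_eq_sum_range]
    exact Fintype.sum_equiv Fin.revPerm _ _ fun m => by simp [Fin.val_rev, Nat.sub_sub, add_comm]
  obtain ⟨e, he⟩ : ∃ e : ℕ, d - 1 = (i : ℕ) + e := ⟨d - 1 - i, by omega⟩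
  have hw : ((i : ℕ) : ℤ) - d = -((e + 1 : ℕ) : ℤ) := by omega
  have hu := one_add_mul_invOneAdd j
  have hui : invOneAdd d j ^ (i : ℕ) * (1 + β d * x d j) ^ (i : ℕ) = 1 := by
    rw [← mul_pow, mul_comm, hu, one_pow]
  rw [sum_congr rfl fun m _ => hterm m, hreflect, sum_esym_mul_binomConv_Fcoeff, hw,
    ← invOneAdd_pow_eq_binomConv, he, pow_add, pow_succ]
  linear_combination (fb d (x d j) k * invOneAdd d j ^ e) * hu -
    (fb d (x d j) k * invOneAdd d j ^ e) * hui

end Entries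

/-- `det H' · det M̄ = (∏_j (1+βx_j)^{1-d}) ·` (the bi-alternant determinant). -/
theorem detH'_mul_detMbar
    (d : ℕ) (a : Fin d → ℤ) (ha : ∀ i : Fin d, 0 ≤ a i + d - ((i : ℕ) + 1)) :
    Matrix.det (Matrix.of fun i j : Fin d =>
        seriesSum d fun s =>
          Ring.choose (((i : ℕ) : ℤ) - ((j : ℕ) : ℤ)) s •
            (β d ^ s * G d (a i + d - ((i : ℕ) + 1)).toNat (a i + (j : ℕ) - (i : ℕ) + s))) *
      Matrix.det (Matrix.of fun i j : Fin d =>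
        (-1 : R d) ^ (d - 1 - (i : ℕ)) *
          esym d (Finset.univ \ {j}) (d - 1 - (i : ℕ)) (xbar d))
      = (∏ j : Fin d, invOneAdd d j ^ (d - 1)) *
          Matrix.det (Matrix.of fun i j : Fin d =>
            fb d (x d j) (a i + d - ((i : ℕ) + 1)).toNat *
              (1 + β d * x d j) ^ (i : ℕ)) := by
  rw [← Matrix.det_mul, ← Matrix.det_mul_row]
  refine congrArg Matrix.det (Matrix.ext fun i j => ?_)
  rw [Matrix.mul_apply, Matrix.of_apply]
  exact sum_binomConv_G_mul_esym (a i) i j (Int.toNat_of_nonneg (ha i))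

end GrothDet
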